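/- arXiv:1012.3843 — 6 statements merged into one kernel-verified Lean document; each statement's English description precedes it below -/
import Mathlib

section
/- Let λ > 0 and let P₀, P₁, P₂ be three distinct points in ℤ² each of Euclidean norm λ, with |P₀ - P₁| ≤ |P₀ - P₂|. Then |P₀ - P₂|² · |P₀ - P₁| > c·λ for some absolute constant c > 0 (one may take c = 1/2 after checking the area argument; it suffices to prove |P₀ - P₂|² · |P₀ - P₁| ≥ λ/2 under the additional harmless assumption |P₀-P₂| ≤ λ). -/
/-!
Twice the area of the triangle `P₀P₁P₂` is a nonzero integer `D`, and the circumradius formula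
`abc = 4λ·Area` reads `4λ²D² = |P₀ - P₁|²|P₀ - P₂|²|P₁ - P₂|²`. Hence
`4λ² ≤ |P₀ - P₁|²|P₀ - P₂|²(2|P₀ - P₂|)²`, i.e. `λ ≤ |P₀ - P₂|²|P₀ - P₁|`.
-/

noncomputable def toC (p : ℤ × ℤ) : ℂ := (p.1 : ℂ) + (p.2 : ℂ) * Complex.I

open ComplexConjugate

/-- The circumradius formula `abc = 4RK` for the triangle `P, P + u, P + v`, where `P = (x, y)`;
the hypotheses say `‖P + u‖ = ‖P + v‖ = ‖P‖ = R`. -/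
theorem four_mul_sq_radius_mul_sq_cross_eq {x y u₁ u₂ v₁ v₂ : ℝ}
    (hu : 2 * (x * u₁ + y * u₂) = -(u₁ ^ 2 + u₂ ^ 2))
    (hv : 2 * (x * v₁ + y * v₂) = -(v₁ ^ 2 + v₂ ^ 2)) :
    4 * (x ^ 2 + y ^ 2) * (u₁ * v₂ - u₂ * v₁) ^ 2 =
      (u₁ ^ 2 + u₂ ^ 2) * (v₁ ^ 2 + v₂ ^ 2) * ((u₁ - v₁) ^ 2 + (u₂ - v₂) ^ 2) := by
  -- Cramer's rule recovers `P` from the two linear conditions.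
  have hx : 2 * (u₁ * v₂ - u₂ * v₁) * x = (v₁ ^ 2 + v₂ ^ 2) * u₂ - (u₁ ^ 2 + u₂ ^ 2) * v₂ := by
    linear_combination v₂ * hu - u₂ * hv
  have hy : 2 * (u₁ * v₂ - u₂ * v₁) * y = (u₁ ^ 2 + u₂ ^ 2) * v₁ - (v₁ ^ 2 + v₂ ^ 2) * u₁ := by
    linear_combination u₁ * hv - v₁ * hu
  calc 4 * (x ^ 2 + y ^ 2) * (u₁ * v₂ - u₂ * v₁) ^ 2
      = (2 * (u₁ * v₂ - u₂ * v₁) * x) ^ 2 + (2 * (u₁ * v₂ - u₂ * v₁) * y) ^ 2 := by ring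
    _ = _ := by rw [hx, hy]; ring

namespace Complex

theorem four_mul_sq_norm_mul_sq_im_mul_conj_eq {a b c : ℂ} (hb : ‖b‖ = ‖a‖) (hc : ‖c‖ = ‖a‖) :
    4 * ‖a‖ ^ 2 * ((b - a) * conj (c - a)).im ^ 2 = ‖a - b‖ ^ 2 * ‖a - c‖ ^ 2 * ‖b - c‖ ^ 2 := by
  have hb' := congrArg (· ^ 2) hb
  have hc' := congrArg (· ^ 2) hc
  simp only [Complex.sq_norm, normSq_apply] at hb' hc' ⊢
  have key := four_mul_sq_radius_mul_sq_cross_eq (x := a.re) (y := a.im)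
    (u₁ := b.re - a.re) (u₂ := b.im - a.im) (v₁ := c.re - a.re) (v₂ := c.im - a.im)
    (by linear_combination hb') (by linear_combination hc')
  simp only [mul_im, sub_re, sub_im, conj_re, conj_im]
  linear_combination key

end Complex

@[simp] theorem toC_re (p : ℤ × ℤ) : (toC p).re = p.1 := by simp [toC]

@[simp] theorem toC_im (p : ℤ × ℤ) : (toC p).im = p.2 := by simp [toC]

theorem toC_injective : Function.Injective toC := fun p q h => by
  have hre := congrArg Complex.re h
  have him := congrArg Complex.im h
  simp only [toC_re, toC_im, Int.cast_inj] at hre him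
  exact Prod.ext hre him

theorem im_toC_sub_mul_conj_toC_sub (p q r : ℤ × ℤ) :
    ((toC q - toC p) * conj (toC r - toC p)).im =
      (((q.2 - p.2) * (r.1 - p.1) - (q.1 - p.1) * (r.2 - p.2) : ℤ) : ℝ) := by
  simp only [Complex.mul_im, Complex.sub_re, Complex.sub_im, Complex.conj_re, Complex.conj_im,
    toC_re, toC_im]
  push_cast
  ring

/-- A lattice triangle has area at least `1/2`. -/
theorem four_mul_sq_norm_le_of_lattice_concyclic {p q r : ℤ × ℤ}
    (hpq : p ≠ q) (hpr : p ≠ r) (hqr : q ≠ r)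
    (hq : ‖toC q‖ = ‖toC p‖) (hr : ‖toC r‖ = ‖toC p‖) :
    4 * ‖toC p‖ ^ 2 ≤ ‖toC p - toC q‖ ^ 2 * ‖toC p - toC r‖ ^ 2 * ‖toC q - toC r‖ ^ 2 := by
  have key := Complex.four_mul_sq_norm_mul_sq_im_mul_conj_eq hq hr
  rw [im_toC_sub_mul_conj_toC_sub] at key
  set D : ℤ := (q.2 - p.2) * (r.1 - p.1) - (q.1 - p.1) * (r.2 - p.2)
  have hsides : 0 < ‖toC p - toC q‖ ^ 2 * ‖toC p - toC r‖ ^ 2 * ‖toC q - toC r‖ ^ 2 := by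
    have side_pos {s t : ℤ × ℤ} (hst : s ≠ t) : 0 < ‖toC s - toC t‖ :=
      norm_pos_iff.2 (sub_ne_zero.2 (toC_injective.ne hst))
    have := side_pos hpq
    have := side_pos hpr
    have := side_pos hqr
    positivity
  have hD : D ≠ 0 := by
    rintro hD
    rw [hD, Int.cast_zero] at key
    linarith
  have hD_sq : (1 : ℝ) ≤ (D : ℝ) ^ 2 := by
    exact_mod_cast (one_le_sq_iff_one_le_abs D).2 (Int.one_le_abs hD)
  calc 4 * ‖toC p‖ ^ 2 = 4 * ‖toC p‖ ^ 2 * 1 := (mul_one _).symm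
    _ ≤ 4 * ‖toC p‖ ^ 2 * (D : ℝ) ^ 2 := by gcongr
    _ = _ := key

theorem norm_le_sq_mul_of_lattice_concyclic {p q r : ℤ × ℤ}
    (hpq : p ≠ q) (hpr : p ≠ r) (hqr : q ≠ r)
    (hq : ‖toC q‖ = ‖toC p‖) (hr : ‖toC r‖ = ‖toC p‖)
    (hord : ‖toC p - toC q‖ ≤ ‖toC p - toC r‖) :
    ‖toC p‖ ≤ ‖toC p - toC r‖ ^ 2 * ‖toC p - toC q‖ := by
  have hqr_le : ‖toC q - toC r‖ ≤ 2 * ‖toC p - toC r‖ := by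
    calc ‖toC q - toC r‖ ≤ ‖toC q - toC p‖ + ‖toC p - toC r‖ :=
          norm_sub_le_norm_sub_add_norm_sub _ _ _
      _ ≤ 2 * ‖toC p - toC r‖ := by rw [norm_sub_rev]; linarith
  have hsq : ‖toC p‖ ^ 2 ≤ (‖toC p - toC r‖ ^ 2 * ‖toC p - toC q‖) ^ 2 := by
    have harea := four_mul_sq_norm_le_of_lattice_concyclic hpq hpr hqr hq hr
    have : ‖toC p - toC q‖ ^ 2 * ‖toC p - toC r‖ ^ 2 * ‖toC q - toC r‖ ^ 2 ≤
        ‖toC p - toC q‖ ^ 2 * ‖toC p - toC r‖ ^ 2 * (2 * ‖toC p - toC r‖) ^ 2 := by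
      gcongr
    linarith
  exact (pow_le_pow_iff_left₀ (norm_nonneg _) (by positivity) two_ne_zero).1 hsq

theorem stmt_0_general (lam : ℝ) (P₀ P₁ P₂ : ℤ × ℤ)
    (h0 : ‖toC P₀‖ = lam)
    (h1 : ‖toC P₁‖ = lam)
    (h2 : ‖toC P₂‖ = lam)
    (hne01 : P₀ ≠ P₁) (hne02 : P₀ ≠ P₂) (hne12 : P₁ ≠ P₂)
    (hord : ‖toC P₀ - toC P₁‖ ≤ ‖toC P₀ - toC P₂‖) :
    lam / 2 ≤ (‖toC P₀ - toC P₂‖) ^ 2 * ‖toC P₀ - toC P₁‖ := by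
  subst h0
  have := norm_le_sq_mul_of_lattice_concyclic hne01 hne02 hne12 h1 h2 hord
  linarith [norm_nonneg (toC P₀)]

theorem stmt_0 (lam : ℝ) (hlam : 0 < lam) (P₀ P₁ P₂ : ℤ × ℤ)
    (h0 : ‖toC P₀‖ = lam)
    (h1 : ‖toC P₁‖ = lam)
    (h2 : ‖toC P₂‖ = lam)
    (hne01 : P₀ ≠ P₁) (hne02 : P₀ ≠ P₂) (hne12 : P₁ ≠ P₂)
    (hord : ‖toC P₀ - toC P₁‖ ≤ ‖toC P₀ - toC P₂‖)
    (hsmall : ‖toC P₀ - toC P₂‖ ≤ lam) :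
    lam / 2 ≤ (‖toC P₀ - toC P₂‖) ^ 2 * ‖toC P₀ - toC P₁‖ :=
  stmt_0_general lam P₀ P₁ P₂ h0 h1 h2 hne01 hne02 hne12 hord
end

section
/- Let λ² = E be a positive integer and let P₁, …, Pₘ be distinct points of ℤ² (identified with Gaussian integers) with |Pⱼ|² = E for all j. Then ∏_{1 ≤ i < j ≤ m} |Pᵢ − Pⱼ| ≥ λ^{m/2·(m/2 − 1)} if m is even, and ≥ λ^{(m−1)²/4} if m is odd. -/
open Finset Matrix

-- Truncated subtraction encodes the two cases of the matrix in one formula.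
theorem Matrix.det_mul_pow_eq_pow_mul_det_vandermonde {R : Type*} [CommRing R] {m : ℕ}
    (k : ℕ) (z w : Fin m → R) (e : R) (hwz : ∀ j, w j * z j = e) :
    (∏ j, z j ^ k) * (of fun j t : Fin m => w j ^ (k - t) * z j ^ ((t : ℕ) - k)).det =
      e ^ (∑ t : Fin m, (k - t)) * (vandermonde z).det := by
  rw [← det_mul_column, ← prod_pow_eq_pow_sum, ← det_mul_row]
  congr 1
  ext j t
  simp only [of_apply, vandermonde_apply, ← hwz j, mul_pow]
  rcases le_total k t with h | h
  · obtain ⟨r, hr⟩ := Nat.exists_eq_add_of_le h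
    rw [Nat.sub_eq_zero_of_le h, hr, Nat.add_sub_cancel_left]
    ring
  · obtain ⟨r, rfl⟩ := Nat.exists_eq_add_of_le h
    rw [Nat.add_sub_cancel_left, Nat.sub_eq_zero_of_le h]
    ring

theorem Finset.sum_range_sub_mul_two (k : ℕ) : (∑ t ∈ range k, (k - t)) * 2 = k * (k + 1) := by
  induction k with
  | zero => simp
  | succ k ih =>
    rw [sum_range_succ', add_mul, Nat.sub_zero]
    simp only [Nat.add_sub_add_right]
    rw [ih]
    ring

theorem Fin.sum_sub_mul_two {k m : ℕ} (hkm : k ≤ m) :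
    (∑ t : Fin m, (k - t)) * 2 = k * (k + 1) := by
  obtain ⟨r, rfl⟩ := Nat.exists_eq_add_of_le hkm
  rw [Fin.sum_univ_eq_sum_range (fun t => k - t), sum_range_add]
  simp [sum_range_sub_mul_two]

theorem Zsqrtd.norm_pow {d : ℤ} (x : ℤ√d) (n : ℕ) : (x ^ n).norm = x.norm ^ n :=
  map_pow normMonoidHom x n

theorem Zsqrtd.norm_prod {d : ℤ} {ι : Type*} (s : Finset ι) (f : ι → ℤ√d) :
    (∏ i ∈ s, f i).norm = ∏ i ∈ s, (f i).norm :=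
  map_prod normMonoidHom f s

theorem GaussianInt.pow_le_pow_mul_norm_det_vandermonde {m : ℕ} {g : Fin m → GaussianInt}
    (hg : Function.Injective g) {E : ℕ} (hE : 0 < E) (hnorm : ∀ j, (g j).norm = E)
    {k : ℕ} (hkm : k ≤ m) :
    (E : ℤ) ^ (k * m) ≤ E ^ (k * (k + 1)) * (vandermonde g).det.norm := by
  have hwz : ∀ j, star (g j) * g j = E := fun j => by
    rw [mul_comm, ← Zsqrtd.norm_eq_mul_conj, hnorm, Int.cast_natCast]
  have key := det_mul_pow_eq_pow_mul_det_vandermonde k g (star ∘ g) _ hwz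
  have hV : (vandermonde g).det ≠ 0 := det_vandermonde_ne_zero_iff.2 hg
  set B := (of fun j t : Fin m => (star ∘ g) j ^ (k - t) * g j ^ ((t : ℕ) - k)).det
  have hB : B ≠ 0 := by
    rintro hB
    rw [hB, mul_zero] at key
    exact mul_ne_zero (pow_ne_zero _ (Nat.cast_ne_zero.2 hE.ne')) hV key.symm
  have hnormB : 1 ≤ B.norm := GaussianInt.norm_pos.2 hB
  have hnormL : (∏ j, g j ^ k).norm = (E : ℤ) ^ (k * m) := by
    simp [Zsqrtd.norm_prod, Zsqrtd.norm_pow, hnorm, pow_mul]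
  have hnormR : ((E : GaussianInt) ^ (∑ t : Fin m, (k - t))).norm = (E : ℤ) ^ (k * (k + 1)) := by
    rw [Zsqrtd.norm_pow, Zsqrtd.norm_natCast, ← Fin.sum_sub_mul_two hkm, mul_comm _ 2, pow_mul,
      sq]
  have := congrArg Zsqrtd.norm key
  rw [Zsqrtd.norm_mul, Zsqrtd.norm_mul, hnormL, hnormR] at this
  rw [← this]
  exact le_mul_of_one_le_right (by positivity) hnormB

theorem Nat.div_two_mul_self_eq (m : ℕ) :
    m / 2 * m = m / 2 * (m / 2 + 1) + if Even m then m / 2 * (m / 2 - 1) else (m - 1) ^ 2 / 4 := by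
  rcases Nat.even_or_odd' m with ⟨r, rfl | rfl⟩
  · rw [if_pos (even_two_mul r), Nat.mul_div_cancel_left r two_pos]
    rcases r with _ | r
    · rfl
    · rw [Nat.add_sub_cancel]; ring
  · have hr : (2 * r + 1) / 2 = r := by omega
    rw [if_neg (Nat.not_even_iff_odd.2 (odd_two_mul_add_one r)), hr, Nat.add_sub_cancel, mul_pow]
    norm_num
    ring

theorem GaussianInt.norm_toComplex_sq (x : GaussianInt) : ‖(x : ℂ)‖ ^ 2 = x.norm := by
  rw [Complex.sq_norm, GaussianInt.intCast_real_norm]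

open Finset in
/-- Cilleruelo–Córdoba / Cilleruelo–Granville product lower bound for distinct
lattice points on the circle of radius `λ = √E`. -/
theorem stmt_3 (E : ℕ) (hE : 0 < E) (lam : ℝ) (hlam : lam = Real.sqrt E)
    (m : ℕ) (P : Fin m → ℤ × ℤ) (hinj : Function.Injective P)
    (hcirc : ∀ j, (P j).1 ^ 2 + (P j).2 ^ 2 = (E : ℤ)) :
    (∏ i : Fin m, ∏ j ∈ Finset.Ioi i, ‖toC (P i) - toC (P j)‖) ≥
      if Even m then lam ^ (m / 2 * (m / 2 - 1)) else lam ^ ((m - 1) ^ 2 / 4) := by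
  set g : Fin m → GaussianInt := fun j => ⟨(P j).1, (P j).2⟩
  have hg : Function.Injective g := fun a b h => hinj (Prod.ext_iff.2 (Zsqrtd.ext_iff.1 h))
  have hnorm : ∀ j, (g j).norm = E := fun j => by
    rw [Zsqrtd.norm_def, ← hcirc j]; ring
  have hgC : ∀ j, toC (P j) = g j := fun j => (GaussianInt.toComplex_def' _ _).symm
  have hprod : (∏ i : Fin m, ∏ j ∈ Ioi i, ‖toC (P i) - toC (P j)‖) =
      ‖((vandermonde g).det : ℂ)‖ := by
    simp only [hgC, det_vandermonde, map_prod, Complex.norm_prod, GaussianInt.toComplex_sub]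
    exact prod_congr rfl fun i _ => prod_congr rfl fun j _ => norm_sub_rev _ _
  have hbound := GaussianInt.pow_le_pow_mul_norm_det_vandermonde hg hE hnorm (Nat.div_le_self m 2)
  rw [Nat.div_two_mul_self_eq, pow_add, mul_le_mul_iff_right₀ (pow_pos (Nat.cast_pos.2 hE) _)] at hbound
  subst hlam
  rw [ge_iff_le, ← pow_ite, hprod, ← pow_le_pow_iff_left₀ (by positivity) (norm_nonneg _) two_ne_zero,
    GaussianInt.norm_toComplex_sq, ← pow_mul, mul_comm, pow_mul, Real.sq_sqrt (Nat.cast_nonneg E)]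
  exact_mod_cast hbound
end

section
/- Let m ≥ 2 and δ(m) = 1/(4⌊m/2⌋ + 2). Let E = λ² be a positive integer and let C be an arc of the circle {|x| = λ} in ℝ² of length r < √2 · λ^{1/2 − δ(m)}. Then C contains at most m lattice points of ℤ². -/
open Finset

section LaurentVandermonde

variable {R : Type*} [CommRing R] {n : ℕ}

/-- Column `k` holds `z j ^ (k - s)`, the negative powers `z j ^ (-l)` being realised as `w j ^ l`
(think of `w j = e / z j`); the two truncated subtractions leave at most one exponent nonzero. -/
def laurentVandermonde (s : ℕ) (w z : Fin n → R) : Matrix (Fin n) (Fin n) R :=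
  Matrix.of fun j k => w j ^ (s - k) * z j ^ ((k : ℕ) - s)

theorem prod_pow_mul_det_laurentVandermonde (s : ℕ) {e : R} {w z : Fin n → R}
    (hzw : ∀ j, z j * w j = e) :
    (∏ j, z j ^ s) * (laurentVandermonde s w z).det =
      (∏ k : Fin n, e ^ (s - k : ℕ)) * ∏ i, ∏ j ∈ Ioi i, (z j - z i) := by
  have hentries : (Matrix.of fun j k => z j ^ s * laurentVandermonde s w z j k) =
      Matrix.of fun j (k : Fin n) => e ^ (s - k : ℕ) * Matrix.vandermonde z j k := by
    ext j k
    simp only [laurentVandermonde, Matrix.of_apply, Matrix.vandermonde_apply, ← hzw j]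
    rcases le_total (k : ℕ) s with hk | hk
    · obtain ⟨l, hl⟩ := Nat.exists_eq_add_of_le hk
      rw [hl, Nat.add_sub_cancel_left, Nat.sub_eq_zero_of_le (Nat.le_add_right _ _)]
      ring
    · obtain ⟨l, hl⟩ := Nat.exists_eq_add_of_le hk
      rw [hl, Nat.add_sub_cancel_left, Nat.sub_eq_zero_of_le (Nat.le_add_right _ _)]
      ring
  rw [← Matrix.det_mul_column, hentries, Matrix.det_mul_row, Matrix.det_vandermonde]

end LaurentVandermonde

theorem Fin.sum_card_Ioi (n : ℕ) : ∑ i : Fin n, #(Ioi i) = n.choose 2 := by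
  simp only [Fin.card_Ioi]
  rw [Fin.sum_univ_eq_sum_range (fun i => n - 1 - i), sum_range_reflect (fun i => i),
    sum_range_id, Nat.choose_two_right]

theorem Fin.prod_prod_Ioi_const {M : Type*} [CommMonoid M] (n : ℕ) (c : M) :
    ∏ i : Fin n, ∏ _j ∈ Ioi i, c = c ^ n.choose 2 := by
  rw [Finset.prod_congr rfl fun i _ => Finset.prod_const c, Finset.prod_pow_eq_pow_sum,
    Fin.sum_card_Ioi]

theorem two_mul_sum_tsub {s n : ℕ} (hs : s < n) :
    2 * ∑ k : Fin n, (s - k : ℕ) = s * (s + 1) := by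
  induction n, hs using Nat.le_induction with
  | base =>
    have hreflect := sum_range_reflect (fun k => k) (s + 1)
    simp only [Nat.add_sub_cancel] at hreflect
    rw [Fin.sum_univ_eq_sum_range (fun k => s - k), hreflect, mul_comm, sum_range_id_mul_two,
      Nat.add_sub_cancel, mul_comm]
  | succ n hn ih =>
    rw [Fin.sum_univ_castSucc, Fin.val_last, Nat.sub_eq_zero_of_le (Nat.le_of_succ_le hn),
      add_zero]
    exact ih

theorem mul_tsub_le_choose_two (s n : ℕ) : s * (n - 1 - s) ≤ n.choose 2 := by
  rw [Nat.choose_two_right, Nat.le_div_iff_mul_le two_pos]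
  rcases lt_or_ge s n with h | h
  · obtain ⟨t, rfl⟩ := Nat.exists_eq_add_of_lt h
    rw [Nat.add_sub_cancel, Nat.add_sub_cancel_left]
    nlinarith
  · rw [show n - 1 - s = 0 by omega, mul_zero, zero_mul]
    exact Nat.zero_le _

namespace GaussianInt

local notation "ℤ[i]" => GaussianInt

theorem two_dvd_norm_iff (z : ℤ[i]) : 2 ∣ z.norm ↔ 2 ∣ z.re + z.im := by
  simp [Zsqrtd.norm_def, ← even_iff_two_dvd, parity_simps]

theorem two_dvd_norm_sub {y y' : ℤ[i]} (hy : ¬2 ∣ y.norm) (hy' : ¬2 ∣ y'.norm) :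
    2 ∣ (y - y').norm := by
  rw [two_dvd_norm_iff] at *
  simp only [Zsqrtd.re_sub, Zsqrtd.im_sub]
  omega

theorem norm_one_add_I : (⟨1, 1⟩ : ℤ[i]).norm = 2 := rfl

theorem one_add_I_dvd_of_two_dvd_norm {z : ℤ[i]} (h : 2 ∣ z.norm) : ⟨1, 1⟩ ∣ z := by
  obtain ⟨k, hk⟩ := (two_dvd_norm_iff z).1 h
  exact ⟨⟨k, z.im - k⟩, by ext <;> simp; omega⟩

theorem exists_eq_pow_mul_of_norm_eq {a : ℕ} {e : ℤ} {z : ℤ[i]} (h : z.norm = 2 ^ a * e) :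
    ∃ y, z = ⟨1, 1⟩ ^ a * y ∧ y.norm = e := by
  induction a generalizing z with
  | zero => exact ⟨z, by simp, by simpa using h⟩
  | succ a ih =>
    obtain ⟨w, rfl⟩ := one_add_I_dvd_of_two_dvd_norm ⟨2 ^ a * e, by rw [h, pow_succ']; ring⟩
    rw [Zsqrtd.norm_mul, norm_one_add_I, pow_succ', mul_assoc] at h
    obtain ⟨y, rfl, hy⟩ := ih (mul_left_cancel₀ two_ne_zero h)
    exact ⟨y, by ring, hy⟩

theorem norm_mk (a b : ℤ) : (⟨a, b⟩ : ℤ[i]).norm = a ^ 2 + b ^ 2 := by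
  rw [Zsqrtd.norm_def]
  ring

theorem intCast_norm_mk_sub_mk (p q : ℤ × ℤ) :
    (((⟨p.1, p.2⟩ - ⟨q.1, q.2⟩ : ℤ[i]).norm : ℤ) : ℝ) = ‖toC p - toC q‖ ^ 2 := by
  rw [intCast_real_norm, Complex.normSq_eq_norm_sq, toComplex_sub, toComplex_def',
    toComplex_def', toC, toC]

variable {n s : ℕ} {z : Fin n → ℤ[i]}

theorem pow_dvd_prod_norm_sub (hs : s < n) {E : ℤ} (hE : E ≠ 0) (hz : ∀ j, (z j).norm = E) :
    E ^ (s * (n - 1 - s)) ∣ ∏ i, ∏ j ∈ Ioi i, (z j - z i).norm := by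
  have hzz : ∀ j, z j * star (z j) = (E : ℤ[i]) := fun j => by
    rw [← hz j, Zsqrtd.norm_eq_mul_conj]
  have key := congrArg Zsqrtd.normMonoidHom (prod_pow_mul_det_laurentVandermonde s hzz)
  simp only [map_mul, map_prod, map_pow] at key
  change (∏ j, (z j).norm ^ s) * _ = (∏ k : Fin n, (E : ℤ[i]).norm ^ (s - k : ℕ)) *
    ∏ i, ∏ j ∈ Ioi i, (z j - z i).norm at key
  rw [prod_congr rfl fun j _ => by rw [hz j], prod_const, card_univ, Fintype.card_fin,
    Zsqrtd.norm_intCast, prod_pow_eq_pow_sum, ← sq, ← pow_mul, ← pow_mul,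
    two_mul_sum_tsub hs] at key
  have hexp : s * n = s * (s + 1) + s * (n - 1 - s) := by
    rw [← mul_add]
    congr 1
    omega
  rw [hexp, pow_add, mul_assoc] at key
  exact Dvd.intro _ (mul_left_cancel₀ (pow_ne_zero _ hE) key)

theorem two_pow_mul_pow_le_prod_norm_sub_of_odd (hs : s < n) {E : ℤ} (hE : Odd E)
    (hz : ∀ j, (z j).norm = E) (hinj : Function.Injective z) :
    2 ^ n.choose 2 * E ^ (s * (n - 1 - s)) ≤ ∏ i, ∏ j ∈ Ioi i, (z j - z i).norm := by
  have hodd : ∀ j, ¬2 ∣ (z j).norm := fun j => by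
    rw [hz j, ← even_iff_two_dvd, Int.not_even_iff_odd]
    exact hE
  have htwo : 2 ^ n.choose 2 ∣ ∏ i, ∏ j ∈ Ioi i, (z j - z i).norm :=
    Fin.prod_prod_Ioi_const n (2 : ℤ) ▸ prod_dvd_prod_of_dvd _ _ fun i _ =>
      prod_dvd_prod_of_dvd _ _ fun j _ => two_dvd_norm_sub (hodd j) (hodd i)
  have hpos : 0 < ∏ i, ∏ j ∈ Ioi i, (z j - z i).norm := prod_pos fun i _ => prod_pos fun j hj =>
    norm_pos.2 (sub_ne_zero.2 (hinj.ne (mem_Ioi.1 hj).ne'))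
  have hcop : IsCoprime (2 ^ n.choose 2 : ℤ) (E ^ (s * (n - 1 - s))) :=
    (Int.isCoprime_two_left.2 hE).pow
  exact Int.le_of_dvd hpos
    (hcop.mul_dvd htwo (pow_dvd_prod_norm_sub hs (by rintro rfl; simp at hE) hz))

theorem two_pow_mul_pow_le_prod_norm_sub (hs : s < n) {E : ℕ} (hE : E ≠ 0)
    (hz : ∀ j, (z j).norm = E) (hinj : Function.Injective z) :
    2 ^ n.choose 2 * (E : ℤ) ^ (s * (n - 1 - s)) ≤ ∏ i, ∏ j ∈ Ioi i, (z j - z i).norm := by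
  obtain ⟨a, E, hodd, rfl⟩ := Nat.exists_eq_two_pow_mul_odd hE
  choose y hzy hy using fun j =>
    exists_eq_pow_mul_of_norm_eq (a := a) (e := (E : ℤ)) (by rw [hz j]; push_cast; rfl)
  have hyinj : Function.Injective y := fun i j h => hinj (by rw [hzy i, hzy j, h])
  have hscale : ∏ i, ∏ j ∈ Ioi i, (z j - z i).norm =
      2 ^ (a * n.choose 2) * ∏ i, ∏ j ∈ Ioi i, (y j - y i).norm := by
    have hnorm : ((⟨1, 1⟩ : ℤ[i]) ^ a).norm = 2 ^ a := map_pow Zsqrtd.normMonoidHom ⟨1, 1⟩ a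
    simp_rw [hzy, ← mul_sub, Zsqrtd.norm_mul, hnorm, prod_mul_distrib, Fin.prod_prod_Ioi_const,
      pow_mul]
  have hK := mul_tsub_le_choose_two s n
  calc 2 ^ n.choose 2 * ((2 ^ a * E : ℕ) : ℤ) ^ (s * (n - 1 - s))
      = 2 ^ (a * (s * (n - 1 - s))) * (2 ^ n.choose 2 * (E : ℤ) ^ (s * (n - 1 - s))) := by
        push_cast
        ring
    _ ≤ 2 ^ (a * n.choose 2) * ∏ i, ∏ j ∈ Ioi i, (y j - y i).norm := by
        gcongr
        · norm_num
        · exact two_pow_mul_pow_le_prod_norm_sub_of_odd hs (Int.odd_coe_nat E |>.2 hodd) hy hyinj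
    _ = _ := hscale.symm

theorem two_pow_mul_pow_le_pow_of_norm_sub_le (hs : s < n) {E : ℕ} (hE : E ≠ 0)
    (hz : ∀ j, (z j).norm = E) (hinj : Function.Injective z) {ρ : ℝ}
    (hρ : ∀ i j, ((z j - z i).norm : ℝ) ≤ ρ) :
    2 ^ n.choose 2 * (E : ℝ) ^ (s * (n - 1 - s)) ≤ ρ ^ n.choose 2 := by
  have hnonneg : ∀ i j, (0 : ℝ) ≤ (z j - z i).norm := fun i j => mod_cast (z j - z i).norm_nonneg
  calc 2 ^ n.choose 2 * (E : ℝ) ^ (s * (n - 1 - s))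
      ≤ ∏ i, ∏ j ∈ Ioi i, ((z j - z i).norm : ℝ) := by
        exact_mod_cast two_pow_mul_pow_le_prod_norm_sub hs hE hz hinj
    _ ≤ ∏ i : Fin n, ∏ _j ∈ Ioi i, ρ :=
        prod_le_prod (fun i _ => prod_nonneg fun j _ => hnonneg i j)
          fun i _ => prod_le_prod (fun j _ => hnonneg i j) fun j _ => hρ i j
    _ = ρ ^ n.choose 2 := Fin.prod_prod_Ioi_const n ρ

end GaussianInt

theorem Complex.norm_exp_mul_I_sub_exp_mul_I_le (t u : ℝ) :
    ‖Complex.exp (t * Complex.I) - Complex.exp (u * Complex.I)‖ ≤ |t - u| := by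
  have hfactor : Complex.exp (t * Complex.I) - Complex.exp (u * Complex.I) =
      Complex.exp (u * Complex.I) * (Complex.exp (Complex.I * (t - u : ℝ)) - 1) := by
    rw [mul_sub, mul_one, ← Complex.exp_add]
    push_cast
    ring_nf
  rw [hfactor, norm_mul, Complex.norm_exp_ofReal_mul_I, one_mul, ← Real.norm_eq_abs]
  exact Real.norm_exp_I_mul_ofReal_sub_one_le

theorem norm_mul_exp_sub_mul_exp_le_of_mem_Icc {lam r θ₀ t u : ℝ} (hlam : 0 < lam)
    (ht : t ∈ Set.Icc θ₀ (θ₀ + r / lam)) (hu : u ∈ Set.Icc θ₀ (θ₀ + r / lam)) :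
    ‖lam * Complex.exp (t * Complex.I) - lam * Complex.exp (u * Complex.I)‖ ≤ r := by
  have htu : |t - u| ≤ r / lam :=
    abs_sub_le_iff.2 ⟨by linarith [ht.2, hu.1], by linarith [ht.1, hu.2]⟩
  calc ‖lam * Complex.exp (t * Complex.I) - lam * Complex.exp (u * Complex.I)‖
      = lam * ‖Complex.exp (t * Complex.I) - Complex.exp (u * Complex.I)‖ := by
        rw [← mul_sub, norm_mul, Complex.norm_real, Real.norm_of_nonneg hlam.le]
    _ ≤ lam * (r / lam) :=
        mul_le_mul_of_nonneg_left ((Complex.norm_exp_mul_I_sub_exp_mul_I_le t u).trans htu) hlam.le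
    _ = r := mul_div_cancel₀ r hlam.ne'

theorem half_sub_inv_mul_choose_two (m : ℕ) :
    ((1 : ℝ) / 2 - 1 / (4 * (m / 2 : ℕ) + 2)) * ((m + 1).choose 2 : ℕ) =
      ((m / 2) * (m - m / 2) : ℕ) := by
  rw [Nat.choose_two_right, Nat.add_sub_cancel]
  obtain ⟨k, rfl | rfl⟩ := Nat.even_or_odd' m
  · rw [show (2 * k + 1) * (2 * k) = 2 * (k * (2 * k + 1)) by ring,
      Nat.mul_div_cancel_left _ two_pos, Nat.mul_div_cancel_left _ two_pos,
      show 2 * k - k = k by omega]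
    push_cast
    field_simp
    ring
  · rw [show (2 * k + 1 + 1) * (2 * k + 1) = 2 * ((k + 1) * (2 * k + 1)) by ring,
      Nat.mul_div_cancel_left _ two_pos, show (2 * k + 1) / 2 = k by omega,
      show 2 * k + 1 - k = k + 1 by omega]
    push_cast
    field_simp
    ring

theorem sq_pow_lt_two_pow_mul_sq_pow {r lam α : ℝ} {N K : ℕ} (hr0 : 0 ≤ r) (hlam : 0 < lam)
    (hN : N ≠ 0) (hK : α * N = K) (hr : r < Real.sqrt 2 * lam ^ α) :
    (r ^ 2) ^ N < 2 ^ N * (lam ^ 2) ^ K := by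
  have hrN : r ^ N < Real.sqrt 2 ^ N * lam ^ K :=
    calc r ^ N < (Real.sqrt 2 * lam ^ α) ^ N := pow_lt_pow_left₀ hr hr0 hN
      _ = Real.sqrt 2 ^ N * lam ^ K := by
        rw [mul_pow, ← Real.rpow_natCast (lam ^ α) N, ← Real.rpow_mul hlam.le, hK,
          Real.rpow_natCast]
  calc (r ^ 2) ^ N = (r ^ N) ^ 2 := by ring
    _ < (Real.sqrt 2 ^ N * lam ^ K) ^ 2 := pow_lt_pow_left₀ hrN (by positivity) two_ne_zero
    _ = 2 ^ N * (lam ^ 2) ^ K := by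
      rw [mul_pow, ← pow_mul, mul_comm N, pow_mul, Real.sq_sqrt zero_le_two]
      ring

/-- An arc of length `r < √2 · λ^{1/2 - δ(m)}`, `δ(m) = 1/(4⌊m/2⌋+2)`, on the circle
of radius `λ = √E` contains at most `m` lattice points. -/
theorem stmt_4 (m : ℕ) (hm : 2 ≤ m) (E : ℕ) (hE : 0 < E) (lam : ℝ)
    (hlam : lam = Real.sqrt E) (r θ₀ : ℝ)
    (hr : r < Real.sqrt 2 * lam ^ ((1 : ℝ) / 2 - 1 / (4 * (m / 2 : ℕ) + 2)))
    (S : Finset (ℤ × ℤ))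
    (hS : ∀ p ∈ S, (p.1 ^ 2 + p.2 ^ 2 = (E : ℤ)) ∧
      ∃ t ∈ Set.Icc θ₀ (θ₀ + r / lam), toC p = lam * Complex.exp (t * Complex.I)) :
    S.card ≤ m := by
  by_contra! hcard
  have hlam0 : 0 < lam := hlam ▸ Real.sqrt_pos.2 (Nat.cast_pos.2 hE)
  obtain ⟨f⟩ := Function.Embedding.nonempty_of_card_le (α := Fin (m + 1)) (β := S)
    (by simpa using hcard)
  choose hnorm t ht hpt using fun i => hS _ (f i).2
  have hr0 : 0 ≤ r := by
    have h0 : 0 ≤ r / lam := by linarith [(ht 0).1, (ht 0).2]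
    simpa [mul_div_cancel₀ r hlam0.ne'] using mul_nonneg hlam0.le h0
  set z : Fin (m + 1) → GaussianInt := fun i => ⟨(f i).1.1, (f i).1.2⟩
  have hzinj : Function.Injective z := fun i j h => f.injective <| Subtype.ext <|
    Prod.ext (congrArg Zsqrtd.re h) (congrArg Zsqrtd.im h)
  have hpair : ∀ i j, ((z j - z i).norm : ℝ) ≤ r ^ 2 := fun i j => by
    rw [GaussianInt.intCast_norm_mk_sub_mk, hpt, hpt]
    gcongr
    exact norm_mul_exp_sub_mul_exp_le_of_mem_Icc hlam0 (ht j) (ht i)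
  have hlower := GaussianInt.two_pow_mul_pow_le_pow_of_norm_sub_le (s := m / 2) (by omega)
    hE.ne' (fun i => (GaussianInt.norm_mk _ _).trans (hnorm i)) hzinj hpair
  have hupper := sq_pow_lt_two_pow_mul_sq_pow hr0 hlam0 (Nat.choose_pos (by omega)).ne'
    (half_sub_inv_mul_choose_two m) hr
  rw [hlam, Real.sq_sqrt (Nat.cast_nonneg E)] at hupper
  exact hupper.not_ge hlower
end

section
/- Fix ε > 0. Then for all but O(N^{1−ε/3}) integers E ≤ N, every pair of distinct lattice points x, y ∈ ℤ² with |x|² = |y|² = E satisfies |x − y| > E^{(1−ε)/2}. -/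
/-!
If `x ≠ y` lie on the circle `|·|² = E`, then `z = x - y` and `w = x + y` are orthogonal, so
writing `z = g v` with `v` primitive forces `w = k v⊥`, and `4E = (g² + k²)|v|²`. Hence every
`E ≤ N` with a chord of squared length `≤ R` comes from a triple `(v, g, k)` with `|v|² ≤ R`,
`0 < |g| ≤ √R / |v|` and `|k| ≤ 2√N / |v|`. There are `O(√(RN) ∑_{0 < |v|² ≤ R} |v|⁻²)` such
triples, and this is `O(√(RN) R^δ)` because `∑_{v ≠ 0} |v|^(-2-2δ)` converges. Take `R = N^(1-ε)`
and `δ = ε/6`. For `ε ≥ 1` nothing is exceptional, since `|x - y|² = 2(E - x·y)` is even.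
-/

open Finset

namespace CircleLatticePoints

def sqNorm (p : ℤ × ℤ) : ℤ := p.1 ^ 2 + p.2 ^ 2

lemma norm_toC_sub_sq (x y : ℤ × ℤ) : ‖toC x - toC y‖ ^ 2 = sqNorm (x - y) := by
  rw [Complex.sq_norm, Complex.normSq_apply]
  simp only [toC, sqNorm, Complex.sub_re, Complex.sub_im, Complex.add_re, Complex.add_im,
    Complex.mul_re, Complex.mul_im, Complex.intCast_re, Complex.intCast_im, Complex.I_re,
    Complex.I_im, Prod.fst_sub, Prod.snd_sub]
  push_cast
  ring

lemma one_le_sqNorm {v : ℤ × ℤ} (hv : v ≠ 0) : 1 ≤ sqNorm v := by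
  have : v.1 ≠ 0 ∨ v.2 ≠ 0 := by
    contrapose! hv
    exact Prod.ext hv.1 hv.2
  unfold sqNorm
  rcases this with h | h <;>
    nlinarith [sq_nonneg v.1, sq_nonneg v.2, Int.one_le_abs h, sq_abs v.1, sq_abs v.2]

lemma sq_norm_le_sqNorm (v : ℤ × ℤ) : ‖v‖ ^ 2 ≤ sqNorm v := by
  rw [Prod.norm_def, sqNorm]
  push_cast
  simp only [Int.norm_eq_abs]
  rcases max_cases |(v.1 : ℝ)| |(v.2 : ℝ)| with ⟨h, -⟩ | ⟨h, -⟩ <;> rw [h, sq_abs] <;>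
    nlinarith [sq_nonneg (v.1 : ℝ), sq_nonneg (v.2 : ℝ)]

lemma sqNorm_smul (g : ℤ) (v : ℤ × ℤ) : sqNorm (g • v) = g ^ 2 * sqNorm v := by
  simp only [sqNorm, Prod.smul_fst, Prod.smul_snd, smul_eq_mul]
  ring

lemma sqNorm_sub_add_sqNorm_add (x y : ℤ × ℤ) :
    sqNorm (x - y) + sqNorm (x + y) = 2 * sqNorm x + 2 * sqNorm y := by
  simp only [sqNorm, Prod.fst_sub, Prod.snd_sub, Prod.fst_add, Prod.snd_add]
  ring

lemma two_le_sqNorm_sub {x y : ℤ × ℤ} (hxy : x ≠ y) (h : sqNorm x = sqNorm y) :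
    2 ≤ sqNorm (x - y) := by
  have hpos := one_le_sqNorm (sub_ne_zero.mpr hxy)
  have heven : sqNorm (x - y) = 2 * (sqNorm x - (x.1 * y.1 + x.2 * y.2)) := by
    simp only [sqNorm, Prod.fst_sub, Prod.snd_sub] at h ⊢
    linear_combination -h
  omega

lemma exists_eq_smul_of_orthogonal {z w : ℤ × ℤ} (hz : z ≠ 0) (h : z.1 * w.1 + z.2 * w.2 = 0) :
    ∃ (v : ℤ × ℤ) (g k : ℤ), z = g • v ∧ w = k • (-v.2, v.1) := by
  set d : ℤ := (Int.gcd z.1 z.2 : ℤ)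
  have hd : 0 < Int.gcd z.1 z.2 := Int.gcd_pos_iff.mpr (by contrapose! hz; exact Prod.ext hz.1 hz.2)
  set v : ℤ × ℤ := (z.1 / d, z.2 / d)
  have hz1 : z.1 = d * v.1 := (Int.mul_ediv_cancel' (Int.gcd_dvd_left _ _)).symm
  have hz2 : z.2 = d * v.2 := (Int.mul_ediv_cancel' (Int.gcd_dvd_right _ _)).symm
  obtain ⟨a, b, hab⟩ : IsCoprime v.1 v.2 :=
    Int.isCoprime_iff_gcd_eq_one.mpr (Int.gcd_div_gcd_div_gcd hd)
  have hvw : v.1 * w.1 + v.2 * w.2 = 0 := by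
    have : d * (v.1 * w.1 + v.2 * w.2) = 0 := by rw [← h, hz1, hz2]; ring
    exact (mul_eq_zero.mp this).resolve_left (by positivity)
  refine ⟨v, d, a * w.2 - b * w.1, Prod.ext hz1 hz2, Prod.ext ?_ ?_⟩
  · simp only [Prod.smul_mk, smul_eq_mul]
    linear_combination -w.1 * hab + a * hvw
  · simp only [Prod.smul_mk, smul_eq_mul]
    linear_combination -w.2 * hab + b * hvw

lemma exists_sqNorm_sub_eq_and_sqNorm_add_eq {x y : ℤ × ℤ} (hxy : x ≠ y)
    (h : sqNorm x = sqNorm y) : ∃ (v : ℤ × ℤ) (g k : ℤ),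
      g ^ 2 * sqNorm v = sqNorm (x - y) ∧ k ^ 2 * sqNorm v = sqNorm (x + y) := by
  have horth : (x - y).1 * (x + y).1 + (x - y).2 * (x + y).2 = 0 := by
    simp only [sqNorm, Prod.fst_sub, Prod.snd_sub, Prod.fst_add, Prod.snd_add] at h ⊢
    linear_combination h
  obtain ⟨v, g, k, hz, hw⟩ := exists_eq_smul_of_orthogonal (sub_ne_zero.mpr hxy) horth
  refine ⟨v, g, k, by rw [hz, sqNorm_smul], ?_⟩
  rw [hw, sqNorm_smul]
  simp only [sqNorm]
  ring

lemma card_Icc_neg_floor_le {r : ℝ} (hr : 0 ≤ r) : (#(Icc (-⌊r⌋) ⌊r⌋) : ℝ) ≤ 2 * r + 1 := by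
  have h0 : 0 ≤ ⌊r⌋ := Int.floor_nonneg.mpr hr
  have hcard : (#(Icc (-⌊r⌋) ⌊r⌋) : ℤ) = 2 * ⌊r⌋ + 1 := by
    rw [Int.card_Icc]; omega
  have : (#(Icc (-⌊r⌋) ⌊r⌋) : ℝ) = 2 * ⌊r⌋ + 1 := by exact_mod_cast hcard
  linarith [Int.floor_le r]

lemma card_Icc_neg_floor_erase_zero_le {r : ℝ} (hr : 0 ≤ r) :
    (#((Icc (-⌊r⌋) ⌊r⌋).erase 0) : ℝ) ≤ 2 * r := by
  have h0 : 0 ≤ ⌊r⌋ := Int.floor_nonneg.mpr hr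
  rw [card_erase_of_mem (by simp [h0]), Nat.cast_sub (by simp; omega), Nat.cast_one]
  linarith [card_Icc_neg_floor_le hr]

lemma mem_Icc_neg_floor_sqrt {k : ℤ} {a B : ℝ} (ha : 0 < a) (h : k ^ 2 * a ≤ B) :
    k ∈ Icc (-⌊√(B / a)⌋) ⌊√(B / a)⌋ := by
  suffices |k| ≤ ⌊√(B / a)⌋ by rw [mem_Icc]; constructor <;> linarith [abs_le.mp this]
  have hB : 0 ≤ B / a := div_nonneg ((by positivity : (0 : ℝ) ≤ k ^ 2 * a).trans h) ha.le
  rw [Int.le_floor, Int.cast_abs, Real.le_sqrt (abs_nonneg _) hB, sq_abs, le_div_iff₀ ha]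
  exact_mod_cast h

lemma card_erase_mul_card_le {q R N : ℝ} (hq : 1 ≤ q) (hqR : q ≤ R) (hRN : R ≤ N) :
    (#((Icc (-⌊√(R / q)⌋) ⌊√(R / q)⌋).erase 0) : ℝ) * #(Icc (-⌊√(4 * N / q)⌋) ⌊√(4 * N / q)⌋) ≤
      10 * √R * √N * q⁻¹ := by
  have hsq : 0 < √q := Real.sqrt_pos.mpr (by linarith)
  have hG : (#((Icc (-⌊√(R / q)⌋) ⌊√(R / q)⌋).erase 0) : ℝ) ≤ 2 * (√R / √q) := by
    rw [← Real.sqrt_div' _ (by linarith)]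
    exact card_Icc_neg_floor_erase_zero_le (Real.sqrt_nonneg _)
  have hK : (#(Icc (-⌊√(4 * N / q)⌋) ⌊√(4 * N / q)⌋) : ℝ) ≤ 5 * (√N / √q) := by
    have h1 : 1 ≤ √N / √q := by
      rw [one_le_div hsq]; exact Real.sqrt_le_sqrt (hqR.trans hRN)
    have h2 : √(4 * N / q) = 2 * (√N / √q) := by
      rw [Real.sqrt_div' _ (by linarith), Real.sqrt_mul' _ (by linarith),
        show (4 : ℝ) = 2 ^ 2 by norm_num, Real.sqrt_sq (by norm_num), mul_div_assoc]
    have := card_Icc_neg_floor_le (Real.sqrt_nonneg (4 * N / q))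
    rw [h2] at this ⊢
    linarith
  calc _ ≤ 2 * (√R / √q) * (5 * (√N / √q)) := mul_le_mul hG hK (by positivity) (by positivity)
    _ = 10 * √R * √N * (√q ^ 2)⁻¹ := by field_simp; ring
    _ = 10 * √R * √N * q⁻¹ := by rw [Real.sq_sqrt (by linarith)]

lemma summable_norm_rpow_neg {k : ℝ} (hk : 2 < k) : Summable fun v : ℤ × ℤ => ‖v‖ ^ (-k) := by
  refine ((finTwoArrowEquiv ℤ).symm.summable_iff.mpr
    (EisensteinSeries.summable_one_div_norm_rpow hk)).congr fun v => ?_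
  simp [Prod.norm_def, EisensteinSeries.norm_eq_max_natAbs, Int.norm_eq_abs]

lemma inv_sqNorm_le {δ : ℝ} (hδ : 0 ≤ δ) {R : ℝ} {v : ℤ × ℤ} (hv : v ≠ 0)
    (hR : (sqNorm v : ℝ) ≤ R) : (sqNorm v : ℝ)⁻¹ ≤ R ^ δ * ‖v‖ ^ (-(2 + 2 * δ)) := by
  have hn : 0 < ‖v‖ := norm_pos_iff.mpr hv
  have hnq := sq_norm_le_sqNorm v
  calc (sqNorm v : ℝ)⁻¹ ≤ (‖v‖ ^ 2)⁻¹ := inv_anti₀ (by positivity) hnq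
    _ = (‖v‖ ^ 2) ^ δ * ‖v‖ ^ (-(2 + 2 * δ)) := by
      rw [← Real.rpow_natCast, ← Real.rpow_mul hn.le, ← Real.rpow_add hn, ← Real.rpow_neg hn.le]
      norm_num
    _ ≤ R ^ δ * ‖v‖ ^ (-(2 + 2 * δ)) := by gcongr; linarith

lemma sum_inv_sqNorm_le {δ : ℝ} (hδ : 0 < δ) {R : ℝ} (hR : 0 ≤ R) {s : Finset (ℤ × ℤ)}
    (hs : ∀ v ∈ s, v ≠ 0 ∧ (sqNorm v : ℝ) ≤ R) :
    ∑ v ∈ s, (sqNorm v : ℝ)⁻¹ ≤ R ^ δ * ∑' v : ℤ × ℤ, ‖v‖ ^ (-(2 + 2 * δ)) := by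
  calc ∑ v ∈ s, (sqNorm v : ℝ)⁻¹ ≤ ∑ v ∈ s, R ^ δ * ‖v‖ ^ (-(2 + 2 * δ)) :=
        sum_le_sum fun v hv => inv_sqNorm_le hδ.le (hs v hv).1 (hs v hv).2
    _ ≤ R ^ δ * ∑' v : ℤ × ℤ, ‖v‖ ^ (-(2 + 2 * δ)) := by
      rw [← mul_sum]
      gcongr
      exact (summable_norm_rpow_neg (by linarith)).sum_le_tsum s fun v _ => by positivity

noncomputable def shortVectors (R : ℝ) : Finset (ℤ × ℤ) :=
  (Icc (-⌊R⌋, -⌊R⌋) (⌊R⌋, ⌊R⌋)).filter fun v => v ≠ 0 ∧ (sqNorm v : ℝ) ≤ R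

lemma mem_shortVectors {R : ℝ} {v : ℤ × ℤ} :
    v ∈ shortVectors R ↔ v ≠ 0 ∧ (sqNorm v : ℝ) ≤ R := by
  refine ⟨fun h => (mem_filter.mp h).2, fun h => mem_filter.mpr ⟨?_, h⟩⟩
  have habs : ∀ a : ℤ, a ^ 2 ≤ sqNorm v → |a| ≤ ⌊R⌋ := fun a ha => by
    rw [Int.le_floor]
    have : (|a| : ℤ) ≤ sqNorm v := by
      rw [Int.abs_eq_natAbs]; exact (Int.natAbs_le_self_sq a).trans ha
    exact_mod_cast (Int.cast_le.mpr this).trans h.2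
  have h1 := abs_le.mp (habs v.1 (by simp only [sqNorm]; nlinarith [sq_nonneg v.2]))
  have h2 := abs_le.mp (habs v.2 (by simp only [sqNorm]; nlinarith [sq_nonneg v.1]))
  simp only [mem_Icc, Prod.le_def]
  omega

def HasShortChord (R : ℝ) (E : ℕ) : Prop :=
  ∃ x y : ℤ × ℤ, x ≠ y ∧ sqNorm x = E ∧ sqNorm y = E ∧ (sqNorm (x - y) : ℝ) ≤ R

lemma HasShortChord.mono {R R' : ℝ} {E : ℕ} (h : HasShortChord R E) (hR : R ≤ R') :
    HasShortChord R' E :=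
  let ⟨x, y, hxy, hx, hy, hxyR⟩ := h
  ⟨x, y, hxy, hx, hy, hxyR.trans hR⟩

lemma not_hasShortChord_of_lt_two {R : ℝ} (hR : R < 2) (E : ℕ) : ¬HasShortChord R E := by
  rintro ⟨x, y, hxy, hx, hy, hxyR⟩
  have : (2 : ℝ) ≤ sqNorm (x - y) := by exact_mod_cast two_le_sqNorm_sub hxy (hx.trans hy.symm)
  linarith

lemma hasShortChord_of_not_forall_lt_norm {ε : ℝ} {E : ℕ}
    (h : ¬∀ x y : ℤ × ℤ, x ≠ y → x.1 ^ 2 + x.2 ^ 2 = (E : ℤ) → y.1 ^ 2 + y.2 ^ 2 = (E : ℤ) →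
      (E : ℝ) ^ ((1 - ε) / 2) < ‖toC x - toC y‖) :
    HasShortChord ((E : ℝ) ^ (1 - ε)) E := by
  push Not at h
  obtain ⟨x, y, hxy, hx, hy, hle⟩ := h
  refine ⟨x, y, hxy, hx, hy, ?_⟩
  rw [← norm_toC_sub_sq, show 1 - ε = (1 - ε) / 2 * 2 by ring, Real.rpow_mul (Nat.cast_nonneg _)]
  exact_mod_cast pow_le_pow_left₀ (norm_nonneg _) hle 2

lemma HasShortChord.exists_sq_add_sq_mul_sqNorm_eq {R : ℝ} {E : ℕ} (h : HasShortChord R E) :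
    ∃ v ∈ shortVectors R, ∃ g k : ℤ, g ≠ 0 ∧ (g ^ 2 * sqNorm v : ℝ) ≤ R ∧
      k ^ 2 * sqNorm v ≤ 4 * E ∧ (g ^ 2 + k ^ 2) * sqNorm v = 4 * E := by
  obtain ⟨x, y, hxy, hx, hy, hR⟩ := h
  obtain ⟨v, g, k, hg, hk⟩ := exists_sqNorm_sub_eq_and_sqNorm_add_eq hxy (hx.trans hy.symm)
  have hpar := sqNorm_sub_add_sqNorm_add x y
  have hpos := one_le_sqNorm (sub_ne_zero.mpr hxy)
  have hv0 : v ≠ 0 := by rintro rfl; rw [show sqNorm 0 = 0 from rfl, mul_zero] at hg; omega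
  have hg0 : g ≠ 0 := by rintro rfl; rw [zero_pow two_ne_zero, zero_mul] at hg; omega
  have hvg : sqNorm v ≤ g ^ 2 * sqNorm v :=
    le_mul_of_one_le_left (zero_le_one.trans (one_le_sqNorm hv0))
      ((one_le_sq_iff_one_le_abs _).mpr (Int.one_le_abs hg0))
  refine ⟨v, mem_shortVectors.mpr ⟨hv0, ?_⟩, g, k, hg0, ?_, ?_, ?_⟩
  · exact (Int.cast_le.mpr hvg).trans (by rw [hg]; exact hR)
  · exact_mod_cast hg ▸ hR
  · omega
  · rw [add_mul, hg, hk]; omega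

open scoped Classical in
theorem card_filter_hasShortChord_le (N : ℕ) {R : ℝ} (hRN : R ≤ N) :
    (#{E ∈ Icc 1 N | HasShortChord R E} : ℝ) ≤
      10 * √R * √N * ∑ v ∈ shortVectors R, (sqNorm v : ℝ)⁻¹ := by
  let G : ℤ × ℤ → Finset ℤ := fun v => (Icc (-⌊√(R / sqNorm v)⌋) ⌊√(R / sqNorm v)⌋).erase 0
  let K : ℤ × ℤ → Finset ℤ := fun v => Icc (-⌊√(4 * N / sqNorm v)⌋) ⌊√(4 * N / sqNorm v)⌋
  have hmaps : Set.MapsTo (fun E : ℕ => 4 * (E : ℤ)) ({E ∈ Icc 1 N | HasShortChord R E} : Finset ℕ)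
      ((shortVectors R).biUnion fun v =>
        (G v ×ˢ K v).image fun gk => (gk.1 ^ 2 + gk.2 ^ 2) * sqNorm v) := by
    intro E hE
    obtain ⟨hEN, hE⟩ := mem_filter.mp hE
    obtain ⟨v, hv, g, k, hg0, hg, hk, hE⟩ := hE.exists_sq_add_sq_mul_sqNorm_eq
    have hq : (0 : ℝ) < sqNorm v := by exact_mod_cast one_le_sqNorm (mem_shortVectors.mp hv).1
    have hkN : (k ^ 2 * sqNorm v : ℝ) ≤ 4 * N := by
      have : k ^ 2 * sqNorm v ≤ 4 * (N : ℤ) := hk.trans (by have := (mem_Icc.mp hEN).2; omega)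
      exact_mod_cast this
    exact mem_biUnion.mpr ⟨v, hv, mem_image.mpr ⟨(g, k), mem_product.mpr
      ⟨mem_erase.mpr ⟨hg0, mem_Icc_neg_floor_sqrt hq hg⟩, mem_Icc_neg_floor_sqrt hq hkN⟩, hE⟩⟩
  have hcard : #{E ∈ Icc 1 N | HasShortChord R E} ≤ ∑ v ∈ shortVectors R, #(G v) * #(K v) :=
    (card_le_card_of_injOn _ hmaps fun E _ E' _ h => by simpa using h).trans <|
      card_biUnion_le.trans <| sum_le_sum fun v _ => card_image_le.trans (card_product _ _).le
  have hterm : ∀ v ∈ shortVectors R,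
      (#(G v) : ℝ) * #(K v) ≤ 10 * √R * √N * (sqNorm v : ℝ)⁻¹ := fun v hv =>
    have hv := mem_shortVectors.mp hv
    card_erase_mul_card_le (by exact_mod_cast one_le_sqNorm hv.1) hv.2 hRN
  calc (#{E ∈ Icc 1 N | HasShortChord R E} : ℝ)
      ≤ ∑ v ∈ shortVectors R, (#(G v) : ℝ) * #(K v) := by exact_mod_cast hcard
    _ ≤ ∑ v ∈ shortVectors R, 10 * √R * √N * (sqNorm v : ℝ)⁻¹ := sum_le_sum hterm
    _ = 10 * √R * √N * ∑ v ∈ shortVectors R, (sqNorm v : ℝ)⁻¹ := (mul_sum _ _ _).symm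

open scoped Classical in
theorem card_filter_hasShortChord_le_tsum {δ : ℝ} (hδ : 0 < δ) (N : ℕ) {R : ℝ} (hR : 0 ≤ R)
    (hRN : R ≤ N) :
    (#{E ∈ Icc 1 N | HasShortChord R E} : ℝ) ≤
      10 * (∑' v : ℤ × ℤ, ‖v‖ ^ (-(2 + 2 * δ))) * (√R * √N * R ^ δ) := by
  calc _ ≤ 10 * √R * √N * ∑ v ∈ shortVectors R, (sqNorm v : ℝ)⁻¹ :=
        card_filter_hasShortChord_le N hRN
    _ ≤ 10 * √R * √N * (R ^ δ * ∑' v : ℤ × ℤ, ‖v‖ ^ (-(2 + 2 * δ))) := by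
        gcongr
        exact sum_inv_sqNorm_le hδ hR fun v hv => mem_shortVectors.mp hv
    _ = _ := by ring

lemma sqrt_rpow_mul_sqrt_mul_rpow_le {N : ℝ} (hN : 1 ≤ N) (ε : ℝ) :
    √(N ^ (1 - ε)) * √N * (N ^ (1 - ε)) ^ (ε / 6) ≤ N ^ (1 - ε / 3) := by
  have hN0 : 0 ≤ N := by linarith
  rw [Real.sqrt_eq_rpow, Real.sqrt_eq_rpow, ← Real.rpow_mul (by positivity),
    ← Real.rpow_mul hN0, ← Real.rpow_add (by positivity), ← Real.rpow_add (by positivity)]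
  exact Real.rpow_le_rpow_of_exponent_le hN (by nlinarith [sq_nonneg ε])

end CircleLatticePoints

open CircleLatticePoints Finset in
open scoped Classical in
/-- For all but `O(N^{1-ε/3})` integers `E ≤ N`, any two distinct lattice points on the
circle of radius `√E` are at distance greater than `E^{(1-ε)/2}`. -/
theorem stmt_5 (ε : ℝ) (hε : 0 < ε) :
    ∃ C : ℝ, 0 < C ∧ ∀ N : ℕ, 0 < N →
      (((Finset.Icc 1 N).filter (fun E : ℕ =>
        ¬ ∀ x y : ℤ × ℤ, x ≠ y →
            x.1 ^ 2 + x.2 ^ 2 = (E : ℤ) → y.1 ^ 2 + y.2 ^ 2 = (E : ℤ) →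
            (E : ℝ) ^ ((1 - ε) / 2) < ‖toC x - toC y‖)).card : ℝ)
        ≤ C * (N : ℝ) ^ (1 - ε / 3) := by
  rcases le_or_gt 1 ε with hε1 | hε1
  · refine ⟨1, one_pos, fun N _ => ?_⟩
    rw [card_eq_zero.mpr (filter_eq_empty_iff.mpr fun E hE h => ?_), Nat.cast_zero]
    · positivity
    refine not_hasShortChord_of_lt_two ?_ E (hasShortChord_of_not_forall_lt_norm h)
    exact (Real.rpow_le_one_of_one_le_of_nonpos (by exact_mod_cast (mem_Icc.mp hE).1)
      (by linarith)).trans_lt one_lt_two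
  set C := ∑' v : ℤ × ℤ, ‖v‖ ^ (-(2 + 2 * (ε / 6)))
  refine ⟨10 * C + 1, by positivity, fun N hN => ?_⟩
  have hN : (1 : ℝ) ≤ N := by exact_mod_cast hN
  set R := (N : ℝ) ^ (1 - ε)
  calc _ ≤ (#{E ∈ Icc 1 N | HasShortChord R E} : ℝ) := by
        refine Nat.cast_le.mpr (card_le_card fun E hE => ?_)
        obtain ⟨hEN, h⟩ := mem_filter.mp hE
        refine mem_filter.mpr ⟨hEN, (hasShortChord_of_not_forall_lt_norm h).mono ?_⟩
        exact Real.rpow_le_rpow (Nat.cast_nonneg _) (by exact_mod_cast (mem_Icc.mp hEN).2)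
          (by linarith)
    _ ≤ 10 * C * (√R * √N * R ^ (ε / 6)) :=
        card_filter_hasShortChord_le_tsum (by positivity) N (by positivity)
          ((Real.rpow_le_rpow_of_exponent_le hN (by linarith)).trans_eq (Real.rpow_one _))
    _ ≤ 10 * C * (N : ℝ) ^ (1 - ε / 3) := by gcongr; exact sqrt_rpow_mul_sqrt_mul_rpow_le hN ε
    _ ≤ (10 * C + 1) * (N : ℝ) ^ (1 - ε / 3) := by gcongr; linarith
end

section
/- Let γ : [0, ℓ] → ℝ² be a C² arc-length parametrization (|γ'(t)| = 1) with κ < |γ''(t)| < 2κ for all t, where 2κℓ < 1. Let ξ ∈ ℝ², ξ ≠ 0, and 0 < ρ < 1/10 be such that |(ξ/|ξ|) · γ'(t)| > ρ for all t ∈ [0, ℓ]. Let ω : ℝ → ℝ≥0 be C¹ with support in [0, ℓ], ∫ω = 1 and ∫|ω'| ≤ c/ℓ. Then |∫ e(ξ·γ(t)) ω(t) dt| ≤ C/(ρ|ξ|) · (1/ℓ + κ/ρ), where e(t) = exp(2πit) and C depends only on c. -/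
open Set Real MeasureTheory
open scoped RealInnerProductSpace

/-!
With `φ t = ⟪ξ, γ t⟫` we have `e(φ) ω = (2πi)⁻¹ (e(φ))' · (ω / φ')`, so one integration by parts,
whose boundary terms vanish because `ω` does at `0` and `ℓ`, gives
`|∫ e(φ) ω| ≤ (2π)⁻¹ ∫ |(ω / φ')'|`. As `|φ'| ≥ ρ‖ξ‖` and `|φ''| ≤ 2κ‖ξ‖`, the quotient rule bounds
`|(ω / φ')'|` by `|ω'| / (ρ‖ξ‖) + 2κ‖ξ‖ ω / (ρ‖ξ‖)²`, whose integral is at most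
`c / (ℓρ‖ξ‖) + 2κ / (ρ²‖ξ‖)`.
-/

theorem Continuous.support_subset_Ioo_of_subset_Icc {M : Type*} [Zero M] [TopologicalSpace M]
    [T1Space M] {f : ℝ → M} {a b : ℝ} (hf : Continuous f) (h : Function.support f ⊆ Icc a b) :
    Function.support f ⊆ Ioo a b := by
  rw [← interior_Icc]
  exact hf.isOpen_support.subset_interior_iff.2 h

theorem support_subset_Ioo_of_hasDerivAt {E : Type*} [NormedAddCommGroup E] [NormedSpace ℝ E]
    {f f' : ℝ → E} {a b : ℝ} (hf : ∀ t, HasDerivAt f (f' t) t) (hf' : Continuous f')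
    (hsupp : Function.support f ⊆ Icc a b) :
    Function.support f ⊆ Ioo a b ∧ Function.support f' ⊆ Ioo a b := by
  refine ⟨(continuous_iff_continuousAt.2 fun t => (hf t).continuousAt)
    |>.support_subset_Ioo_of_subset_Icc hsupp, hf'.support_subset_Ioo_of_subset_Icc ?_⟩
  rw [show f' = deriv f from funext fun t => (hf t).deriv.symm]
  exact support_deriv_subset.trans (closure_minimal hsupp isClosed_Icc)

theorem HasDerivAt.const_inner {E : Type*} [NormedAddCommGroup E] [InnerProductSpace ℝ E]
    {γ : ℝ → E} {γ' : E} {t : ℝ} (ξ : E) (h : HasDerivAt γ γ' t) :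
    HasDerivAt (fun s => ⟪ξ, γ s⟫) ⟪ξ, γ'⟫ t :=
  (innerSL ℝ ξ).hasFDerivAt.comp_hasDerivAt t h

theorem intervalIntegrable_of_hasDerivAt_of_norm_le {E : Type*} [NormedAddCommGroup E]
    [NormedSpace ℝ E] [CompleteSpace E] {f f' : ℝ → E} {a b C : ℝ}
    (hf : ∀ t ∈ uIcc a b, HasDerivAt f (f' t) t) (hC : ∀ t ∈ uIcc a b, ‖f' t‖ ≤ C) :
    IntervalIntegrable f' volume a b := by
  have h_eq : deriv f =ᵐ[volume.restrict (uIcc a b)] f' := by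
    filter_upwards [ae_restrict_mem measurableSet_uIcc] with t ht using (hf t ht).deriv
  have : IsFiniteMeasure (volume.restrict (uIcc a b)) :=
    isFiniteMeasure_restrict.2 isCompact_uIcc.measure_lt_top.ne
  refine IntegrableOn.intervalIntegrable ?_
  refine (integrable_const C).mono' ((aestronglyMeasurable_deriv f _).congr h_eq) ?_
  filter_upwards [ae_restrict_mem measurableSet_uIcc] with t ht using hC t ht

theorem abs_quotient_deriv_le {x y w w' δ M : ℝ} (hδ : 0 < δ) (hx : δ ≤ |x|) (hy : |y| ≤ M) :
    |(w' * x - w * y) / x ^ 2| ≤ |w'| / δ + M / δ ^ 2 * |w| := by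
  have hx0 : 0 < |x| := hδ.trans_le hx
  calc |(w' * x - w * y) / x ^ 2| ≤ (|w'| * |x| + |w| * |y|) / |x| ^ 2 := by
        rw [abs_div, abs_pow]
        gcongr
        exact (abs_sub _ _).trans (by rw [abs_mul, abs_mul])
    _ = |w'| / |x| + |y| / |x| ^ 2 * |w| := by field_simp
    _ ≤ |w'| / δ + M / δ ^ 2 * |w| := by gcongr; exact (abs_nonneg y).trans hy

theorem integral_cexp_mul_deriv_mul {a b : ℝ} {φ φ' h h' : ℝ → ℝ}
    (hφ : ∀ t ∈ uIcc a b, HasDerivAt φ (φ' t) t) (hφ' : ContinuousOn φ' (uIcc a b))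
    (hh : ∀ t ∈ uIcc a b, HasDerivAt h (h' t) t) (hh' : IntervalIntegrable h' volume a b)
    (ha : h a = 0) (hb : h b = 0) :
    ∫ t in a..b, Complex.exp (2 * π * Complex.I * φ t) * (φ' t * h t : ℝ) =
      -(2 * π * Complex.I)⁻¹ * ∫ t in a..b, Complex.exp (2 * π * Complex.I * φ t) * h' t := by
  set e : ℝ → ℂ := fun t => Complex.exp (2 * π * Complex.I * φ t)
  have hI : (2 * π * Complex.I) ≠ 0 := by simp [pi_ne_zero]
  have he : ∀ t ∈ uIcc a b,
      HasDerivAt (fun s => (2 * π * Complex.I)⁻¹ * e s) (e t * φ' t) t := by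
    intro t ht
    refine ((((hφ t ht).ofReal_comp).const_mul (2 * π * Complex.I)).cexp.const_mul
      (2 * π * Complex.I)⁻¹).congr_deriv ?_
    rw [mul_left_comm, inv_mul_cancel_left₀ hI]
  have he' : ContinuousOn (fun t => e t * φ' t) (uIcc a b) := by
    have := HasDerivAt.continuousOn hφ
    fun_prop
  have hparts :=
    intervalIntegral.integral_smul_deriv_eq_deriv_smul hh he hh' he'.intervalIntegrable
  simp only [ha, hb, zero_smul, sub_zero, zero_sub, Complex.real_smul] at hparts
  calc ∫ t in a..b, e t * (φ' t * h t : ℝ) = ∫ t in a..b, (h t : ℂ) * (e t * φ' t) :=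
        intervalIntegral.integral_congr fun t _ => by push_cast; ring
    _ = -∫ t in a..b, (h' t : ℂ) * ((2 * π * Complex.I)⁻¹ * e t) := hparts
    _ = -(2 * π * Complex.I)⁻¹ * ∫ t in a..b, e t * h' t := by
        rw [neg_mul, ← intervalIntegral.integral_const_mul]
        congr 2 with t
        ring

theorem norm_integral_cexp_mul_le {a b δ M : ℝ} {φ φ' φ'' ω ω' : ℝ → ℝ} (hab : a ≤ b)
    (hφ : ∀ t ∈ Icc a b, HasDerivAt φ (φ' t) t) (hφ' : ∀ t ∈ Icc a b, HasDerivAt φ' (φ'' t) t)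
    (hδ : 0 < δ) (hφ'_ge : ∀ t ∈ Icc a b, δ ≤ |φ' t|) (hφ''_le : ∀ t ∈ Icc a b, |φ'' t| ≤ M)
    (hω : ∀ t ∈ Icc a b, HasDerivAt ω (ω' t) t) (hω' : ContinuousOn ω' (Icc a b))
    (ha : ω a = 0) (hb : ω b = 0) :
    ‖∫ t in a..b, Complex.exp (2 * π * Complex.I * φ t) * ω t‖ ≤
      (2 * π)⁻¹ * ((∫ t in a..b, |ω' t|) / δ + M / δ ^ 2 * ∫ t in a..b, |ω t|) := by
  rw [← uIcc_of_le hab] at hφ hφ' hφ'_ge hφ''_le hω hω'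
  set h' : ℝ → ℝ := fun t => (ω' t * φ' t - ω t * φ'' t) / φ' t ^ 2
  have hφ'_ne : ∀ t ∈ uIcc a b, φ' t ≠ 0 := fun t ht => abs_pos.1 (hδ.trans_le (hφ'_ge t ht))
  have hh : ∀ t ∈ uIcc a b, HasDerivAt (fun s => ω s / φ' s) (h' t) t :=
    fun t ht => (hω t ht).div (hφ' t ht) (hφ'_ne t ht)
  have hφ'c : ContinuousOn φ' (uIcc a b) := HasDerivAt.continuousOn hφ'
  have hωc : ContinuousOn ω (uIcc a b) := HasDerivAt.continuousOn hω
  have hh'_int : IntervalIntegrable h' volume a b := by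
    -- `φ''` need not be continuous; it is integrable because it is a bounded derivative.
    have hφ''_int : IntervalIntegrable φ'' volume a b :=
      intervalIntegrable_of_hasDerivAt_of_norm_le hφ' hφ''_le
    simp only [h', div_eq_mul_inv]
    refine IntervalIntegrable.mul_continuousOn ?_
      ((hφ'c.pow 2).inv₀ fun t ht => pow_ne_zero 2 (hφ'_ne t ht))
    exact ((hω'.mul hφ'c).intervalIntegrable).sub (hφ''_int.continuousOn_mul hωc)
  have hω_int : IntervalIntegrable (fun t => |ω t|) volume a b := hωc.abs.intervalIntegrable
  have hω'_int : IntervalIntegrable (fun t => |ω' t|) volume a b := hω'.abs.intervalIntegrable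
  have hparts := integral_cexp_mul_deriv_mul hφ hφ'c hh hh'_int (by simp [ha]) (by simp [hb])
  calc ‖∫ t in a..b, Complex.exp (2 * π * Complex.I * φ t) * ω t‖
        = ‖∫ t in a..b, Complex.exp (2 * π * Complex.I * φ t) * (φ' t * (ω t / φ' t) : ℝ)‖ := by
        congr 1
        exact intervalIntegral.integral_congr fun t ht => by rw [mul_div_cancel₀ _ (hφ'_ne t ht)]
    _ = (2 * π)⁻¹ * ‖∫ t in a..b, Complex.exp (2 * π * Complex.I * φ t) * h' t‖ := by
        rw [hparts, norm_mul, norm_neg, norm_inv]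
        simp [abs_of_pos pi_pos]
    _ ≤ (2 * π)⁻¹ * ∫ t in a..b, (|ω' t| / δ + M / δ ^ 2 * |ω t|) := by
        gcongr
        refine intervalIntegral.norm_integral_le_of_norm_le hab (Filter.Eventually.of_forall
          fun t ht => ?_) ((hω'_int.div_const δ).add (hω_int.const_mul _))
        have ht' : t ∈ uIcc a b := by rw [uIcc_of_le hab]; exact Ioc_subset_Icc_self ht
        have hunit : ‖Complex.exp (2 * π * Complex.I * φ t)‖ = 1 := by
          rw [Complex.norm_exp]; simp
        rw [norm_mul, hunit, one_mul, Complex.norm_real, Real.norm_eq_abs]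
        exact abs_quotient_deriv_le hδ (hφ'_ge t ht') (hφ''_le t ht')
    _ = (2 * π)⁻¹ * ((∫ t in a..b, |ω' t|) / δ + M / δ ^ 2 * ∫ t in a..b, |ω t|) := by
        rw [intervalIntegral.integral_add (hω'_int.div_const δ) (hω_int.const_mul _),
          intervalIntegral.integral_div, intervalIntegral.integral_const_mul]

theorem norm_intervalIntegral_cexp_inner_le {E : Type*} [NormedAddCommGroup E]
    [InnerProductSpace ℝ E] {a b ρ K : ℝ} {γ γ' γ'' : ℝ → E} {ξ : E} {ω ω' : ℝ → ℝ}
    (hab : a ≤ b) (hγ : ∀ t ∈ Icc a b, HasDerivAt γ (γ' t) t)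
    (hγ' : ∀ t ∈ Icc a b, HasDerivAt γ' (γ'' t) t) (hγ''_le : ∀ t ∈ Icc a b, ‖γ'' t‖ ≤ K)
    (hξ : ξ ≠ 0) (hρ : 0 < ρ) (hphase : ∀ t ∈ Icc a b, ρ < |⟪‖ξ‖⁻¹ • ξ, γ' t⟫|)
    (hω : ∀ t ∈ Icc a b, HasDerivAt ω (ω' t) t) (hω' : ContinuousOn ω' (Icc a b))
    (ha : ω a = 0) (hb : ω b = 0) :
    ‖∫ t in a..b, Complex.exp (2 * π * Complex.I * ⟪ξ, γ t⟫) * ω t‖ ≤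
      (2 * π)⁻¹ * ((∫ t in a..b, |ω' t|) / (ρ * ‖ξ‖) +
        K * ‖ξ‖ / (ρ * ‖ξ‖) ^ 2 * ∫ t in a..b, |ω t|) := by
  have hξ_pos : 0 < ‖ξ‖ := norm_pos_iff.2 hξ
  have hphase' : ∀ t ∈ Icc a b, ρ * ‖ξ‖ ≤ |⟪ξ, γ' t⟫| := fun t ht => by
    have h := hphase t ht
    rw [real_inner_smul_left, abs_mul, abs_inv, abs_norm, lt_inv_mul_iff₀ hξ_pos] at h
    linarith
  have hcurv : ∀ t ∈ Icc a b, |⟪ξ, γ'' t⟫| ≤ K * ‖ξ‖ := fun t ht =>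
    calc |⟪ξ, γ'' t⟫| ≤ ‖ξ‖ * ‖γ'' t‖ := abs_real_inner_le_norm ξ (γ'' t)
      _ ≤ K * ‖ξ‖ := by rw [mul_comm]; gcongr; exact hγ''_le t ht
  exact norm_integral_cexp_mul_le hab (fun t ht => (hγ t ht).const_inner ξ)
    (fun t ht => (hγ' t ht).const_inner ξ) (by positivity) hphase' hcurv hω hω' ha hb

/-- Non-stationary phase bound for a regular arc. -/
theorem stmt_7 (c : ℝ) (hc : 0 < c) :
    ∃ C : ℝ, 0 < C ∧
      ∀ (ℓ κ ρ : ℝ) (γ γ' γ'' : ℝ → EuclideanSpace ℝ (Fin 2))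
        (ξ : EuclideanSpace ℝ (Fin 2)) (ω ω' : ℝ → ℝ),
        0 < ℓ → 0 < κ → 2 * κ * ℓ < 1 →
        (∀ t ∈ Icc 0 ℓ, HasDerivAt γ (γ' t) t) →
        (∀ t ∈ Icc 0 ℓ, HasDerivAt γ' (γ'' t) t) →
        (∀ t ∈ Icc 0 ℓ, ‖γ' t‖ = 1) →
        (∀ t ∈ Icc 0 ℓ, κ < ‖γ'' t‖ ∧ ‖γ'' t‖ < 2 * κ) →
        ξ ≠ 0 → 0 < ρ → ρ < 1 / 10 →
        (∀ t ∈ Icc 0 ℓ, ρ < |⟪(‖ξ‖⁻¹ : ℝ) • ξ, γ' t⟫|) →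
        (∀ t : ℝ, HasDerivAt ω (ω' t) t) →
        Continuous ω' →
        (∀ t, 0 ≤ ω t) →
        Function.support ω ⊆ Icc 0 ℓ →
        (∫ t : ℝ, ω t) = 1 →
        (∫ t : ℝ, |ω' t|) ≤ c / ℓ →
        ‖∫ t : ℝ,
            Complex.exp (2 * Real.pi * Complex.I * (⟪ξ, γ t⟫ : ℝ)) * (ω t : ℂ)‖ ≤
          C / (ρ * ‖ξ‖) * (1 / ℓ + κ / ρ) := by
  refine ⟨c + 1, by linarith, ?_⟩
  intro ℓ κ ρ γ γ' γ'' ξ ω ω' hℓ _ _ hγ hγ' _ hcurv hξ hρ _ hphase hω hω'c hω_nonneg hsupp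
    hω_int hω'_int
  obtain ⟨hω_supp, hω'_supp⟩ := support_subset_Ioo_of_hasDerivAt hω hω'c hsupp
  have hω_zero : ∀ t ∉ Ioc 0 ℓ, ω t = 0 :=
    Function.support_subset_iff'.1 (hω_supp.trans Ioo_subset_Ioc_self)
  have hω'_zero : ∀ t ∉ Ioc 0 ℓ, ω' t = 0 :=
    Function.support_subset_iff'.1 (hω'_supp.trans Ioo_subset_Ioc_self)
  have hbound := norm_intervalIntegral_cexp_inner_le hℓ.le hγ hγ' (fun t ht => (hcurv t ht).2.le)
    hξ hρ hphase (fun t _ => hω t) hω'c.continuousOn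
    (Function.support_subset_iff'.1 hω_supp 0 (by simp))
    (Function.support_subset_iff'.1 hω_supp ℓ (by simp))
  rw [intervalIntegral.integral_eq_integral_of_support_subset
      (Function.support_subset_iff'.2 fun t ht => by simp [hω_zero t ht]),
    intervalIntegral.integral_eq_integral_of_support_subset (f := fun t => |ω t|)
      (Function.support_subset_iff'.2 fun t ht => by simp [hω_zero t ht]),
    intervalIntegral.integral_eq_integral_of_support_subset (f := fun t => |ω' t|)
      (Function.support_subset_iff'.2 fun t ht => by simp [hω'_zero t ht])] at hbound
  simp only [abs_of_nonneg (hω_nonneg _), hω_int] at hbound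
  have hπ_inv : π⁻¹ ≤ 1 := inv_le_one_of_one_le₀ (by linarith [pi_gt_three])
  have h2π_inv : (2 * π)⁻¹ ≤ 1 := inv_le_one_of_one_le₀ (by linarith [pi_gt_three])
  refine hbound.trans ?_
  calc (2 * π)⁻¹ * ((∫ t, |ω' t|) / (ρ * ‖ξ‖) + 2 * κ * ‖ξ‖ / (ρ * ‖ξ‖) ^ 2 * 1)
      ≤ (2 * π)⁻¹ * (c / ℓ / (ρ * ‖ξ‖) + 2 * κ * ‖ξ‖ / (ρ * ‖ξ‖) ^ 2 * 1) := by gcongr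
    _ = 1 / (ρ * ‖ξ‖) * ((2 * π)⁻¹ * c * (1 / ℓ) + π⁻¹ * (κ / ρ)) := by field_simp
    _ ≤ 1 / (ρ * ‖ξ‖) * ((c + 1) * (1 / ℓ) + (c + 1) * (κ / ρ)) := by
        gcongr
        · nlinarith
        · linarith
    _ = (c + 1) / (ρ * ‖ξ‖) * (1 / ℓ + κ / ρ) := by ring
end

section
/- If P₀, P₁, P₂ are three distinct points of ℤ² on the circle {|x| = λ}, then |P₀−P₁| · |P₁−P₂| · |P₂−P₀| ≥ λ. -/
/-!
For `x` on the circle of radius `λ`, `conj x = λ² / x`. Ramana's identity then gives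
`x₀ x₁ x₂ · D = λ² ∏ (xᵢ - xⱼ)` where `D = det (1, xⱼ, conj xⱼ)`. For Gaussian integers `D` is
a Gaussian integer, nonzero because the points are distinct, so `|D| ≥ 1`; taking absolute values
gives `λ³ |D| = λ² ∏ |xᵢ - xⱼ|`.
-/

open Complex ComplexConjugate Matrix

/-- Ramana's identity with `k = 1`: if `wⱼ = r / zⱼ`, the determinant is `r / (z₀ z₁ z₂)` times
the Vandermonde determinant of `z₀, z₁, z₂`. -/
theorem mul_det_eq_mul_prod_sub_of_mul_eq {R : Type*} [CommRing R] {z₀ z₁ z₂ w₀ w₁ w₂ r : R}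
    (h₀ : z₀ * w₀ = r) (h₁ : z₁ * w₁ = r) (h₂ : z₂ * w₂ = r) :
    z₀ * z₁ * z₂ * !![1, z₀, w₀; 1, z₁, w₁; 1, z₂, w₂].det =
      r * ((z₀ - z₁) * (z₁ - z₂) * (z₂ - z₀)) := by
  rw [det_fin_three]
  simp only [of_apply, cons_val', cons_val_zero, cons_val_one, cons_val, cons_val_fin_one, one_mul,
    mul_one]
  linear_combination (z₁ * z₂ ^ 2 - z₁ ^ 2 * z₂) * h₀ + (z₀ ^ 2 * z₂ - z₀ * z₂ ^ 2) * h₁ +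
    (z₀ * z₁ ^ 2 - z₀ ^ 2 * z₁) * h₂

namespace GaussianInt

theorem one_le_norm_toComplex {x : GaussianInt} (hx : x ≠ 0) : 1 ≤ ‖(x : ℂ)‖ := by
  have h : (1 : ℝ) ≤ ‖(x : ℂ)‖ ^ 2 := by
    rw [← normSq_eq_norm_sq, ← intCast_real_norm]
    exact_mod_cast norm_pos.mpr hx
  nlinarith [_root_.norm_nonneg (x : ℂ)]

theorem toComplex_det_fin_three (x₀ x₁ x₂ : GaussianInt) :
    ((!![1, x₀, star x₀; 1, x₁, star x₁; 1, x₂, star x₂].det : GaussianInt) : ℂ) =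
      !![1, (x₀ : ℂ), conj (x₀ : ℂ); 1, x₁, conj (x₁ : ℂ); 1, x₂, conj (x₂ : ℂ)].det := by
  simp [det_fin_three, toComplex_star]

theorem le_norm_sub_mul_norm_sub_mul_norm_sub {x₀ x₁ x₂ : GaussianInt} {lam : ℝ}
    (h₀ : ‖(x₀ : ℂ)‖ = lam) (h₁ : ‖(x₁ : ℂ)‖ = lam) (h₂ : ‖(x₂ : ℂ)‖ = lam)
    (h₀₁ : x₀ ≠ x₁) (h₁₂ : x₁ ≠ x₂) (h₂₀ : x₂ ≠ x₀) :
    lam ≤ ‖(x₀ : ℂ) - x₁‖ * ‖(x₁ : ℂ) - x₂‖ * ‖(x₂ : ℂ) - x₀‖ := by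
  have hconj {x : GaussianInt} (hx : ‖(x : ℂ)‖ = lam) :
      (x : ℂ) * conj (x : ℂ) = ((lam ^ 2 : ℝ) : ℂ) := by
    rw [mul_conj, normSq_eq_norm_sq, hx]
  set D : GaussianInt := !![1, x₀, star x₀; 1, x₁, star x₁; 1, x₂, star x₂].det
  have hD : (x₀ : ℂ) * x₁ * x₂ * D =
      ((lam ^ 2 : ℝ) : ℂ) * (((x₀ : ℂ) - x₁) * ((x₁ : ℂ) - x₂) * ((x₂ : ℂ) - x₀)) := by
    rw [toComplex_det_fin_three]
    exact mul_det_eq_mul_prod_sub_of_mul_eq (hconj h₀) (hconj h₁) (hconj h₂)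
  have hlam : lam ≠ 0 := by
    rintro rfl
    exact h₀₁ (by rw [← toComplex_inj, _root_.norm_eq_zero.mp h₀, _root_.norm_eq_zero.mp h₁])
  have hD0 : D ≠ 0 := by
    rintro hD0
    rw [hD0, toComplex_zero, mul_zero, eq_comm] at hD
    simp [sub_eq_zero, toComplex_inj, hlam, h₀₁, h₁₂, h₂₀] at hD
  have hnorm := congrArg norm hD
  simp only [norm_mul, norm_real, Real.norm_eq_abs, abs_of_nonneg (sq_nonneg lam), h₀, h₁, h₂]
    at hnorm
  have hlam0 : 0 ≤ lam := h₀ ▸ _root_.norm_nonneg _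
  have hprod : ‖(x₀ : ℂ) - x₁‖ * ‖(x₁ : ℂ) - x₂‖ * ‖(x₂ : ℂ) - x₀‖ = lam * ‖(D : ℂ)‖ := by
    refine mul_left_cancel₀ (pow_ne_zero 2 hlam) ?_
    linear_combination -hnorm
  rw [hprod]
  exact le_mul_of_one_le_right hlam0 (one_le_norm_toComplex hD0)

end GaussianInt

theorem stmt_13_general (lam : ℝ) (P₀ P₁ P₂ : ℤ × ℤ)
    (h0 : ‖toC P₀‖ = lam)
    (h1 : ‖toC P₁‖ = lam)
    (h2 : ‖toC P₂‖ = lam)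
    (hne01 : P₀ ≠ P₁) (hne02 : P₀ ≠ P₂) (hne12 : P₁ ≠ P₂) :
    lam ≤ ‖toC P₀ - toC P₁‖ * ‖toC P₁ - toC P₂‖ *
      ‖toC P₂ - toC P₀‖ := by
  have hC (P : ℤ × ℤ) : toC P = ((⟨P.1, P.2⟩ : GaussianInt) : ℂ) :=
    (GaussianInt.toComplex_def' _ _).symm
  have hinj {P Q : ℤ × ℤ} (h : P ≠ Q) : (⟨P.1, P.2⟩ : GaussianInt) ≠ ⟨Q.1, Q.2⟩ := fun e =>
    h (Prod.ext (congrArg Zsqrtd.re e) (congrArg Zsqrtd.im e))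
  simp only [hC] at *
  exact GaussianInt.le_norm_sub_mul_norm_sub_mul_norm_sub h0 h1 h2 (hinj hne01) (hinj hne12)
    (hinj hne02).symm

/-- Jarnik-type bound: three distinct lattice points on the circle of radius `λ`
satisfy `|P₀−P₁| · |P₁−P₂| · |P₂−P₀| ≥ λ`. -/
theorem stmt_13 (lam : ℝ) (hlam : 0 < lam) (P₀ P₁ P₂ : ℤ × ℤ)
    (h0 : ‖toC P₀‖ = lam)
    (h1 : ‖toC P₁‖ = lam)
    (h2 : ‖toC P₂‖ = lam)
    (hne01 : P₀ ≠ P₁) (hne02 : P₀ ≠ P₂) (hne12 : P₁ ≠ P₂) :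
    lam ≤ ‖toC P₀ - toC P₁‖ * ‖toC P₁ - toC P₂‖ *
      ‖toC P₂ - toC P₀‖ :=
  stmt_13_general lam P₀ P₁ P₂ h0 h1 h2 hne01 hne02 hne12
end
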